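/- Let α > 0, H ∈ (1/2, 1), r_H as defined, and for T > 0 define l_T(u, v) = (1/(2ατ T)) e^{−2αT} e^{αu} e^{αv} 1_{[0,T]²}(u,v), where τ > 0 is a fixed constant. Then ∫_{[0,T]²}∫_{[0,T]²} l_T(u₁,u₂) l_T(v₁,v₂) r_H(u₁,v₁) r_H(u₂,v₂) du dv ≤ C/T² for some constant C depending only on α, H, τ and all T ≥ 1. -/

import Mathlib

/-!
The kernel `r_H(u, v)` depends only on `u - v`, and `ρ(s) = r_H(s, 0)` is integrable on `ℝ`: it
behaves like `|s|^(2H-2)` near `0` and decays like `exp (-(1-H)|s|/H)` at infinity. Hence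
`∫₀ᵀ e^{αv} r_H(u, v) dv ≤ e^{αT} ‖ρ‖₁`, and
`J_T = ∫₀ᵀ∫₀ᵀ e^{αu} e^{αv} r_H(u, v) dv du ≤ ‖ρ‖₁ e^{2αT} / α`.
On `[0, T]⁴` the integrand factorizes, so the quadruple integral is
`(e^{-2αT} J_T / (2ατT))² ≤ (‖ρ‖₁ / (2α²τ))² / T²`.
-/

open MeasureTheory Real

/-- The kernel r_H. -/
noncomputable def rker (H w z : ℝ) : ℝ :=
  H ^ (2 * H - 1) * (2 * H - 1) * (Real.exp (w / H) * Real.exp (z / H)) ^ (1 - H) *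
    |Real.exp (w / H) - Real.exp (z / H)| ^ (2 * H - 2)

/-- The kernel l_T (with indicator of [0,T]²). -/
noncomputable def lker (α τ T u v : ℝ) : ℝ :=
  Set.indicator (Set.Icc (0:ℝ) T ×ˢ Set.Icc (0:ℝ) T)
    (fun p : ℝ × ℝ => (1 / (2 * α * τ * T)) * Real.exp (-2 * α * T) *
      Real.exp (α * p.1) * Real.exp (α * p.2)) (u, v)

open Set

lemma rker_comm (H w z : ℝ) : rker H w z = rker H z w := by
  rw [rker, rker, mul_comm (exp (w / H)), abs_sub_comm]

lemma rker_eq_rker_sub_zero (H w z : ℝ) : rker H w z = rker H (w - z) 0 := by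
  have hsplit : exp (w / H) - exp (z / H) = exp (z / H) * (exp ((w - z) / H) - exp (0 / H)) := by
    rw [zero_div, exp_zero, mul_sub, mul_one, ← exp_add, sub_div, add_sub_cancel]
  simp only [rker, hsplit, abs_mul, abs_of_pos (exp_pos _), mul_rpow (exp_pos _).le (abs_nonneg _),
    ← exp_add, ← exp_mul, zero_div, add_zero]
  rw [show (w - z) / H * (1 - H) = (w / H + z / H) * (1 - H) + z / H * (2 * H - 2) by ring, exp_add]
  ring

lemma rker_neg_zero (H s : ℝ) : rker H (-s) 0 = rker H s 0 := by
  rw [rker_comm H s, rker_eq_rker_sub_zero H 0 s, zero_sub]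

lemma rker_nonneg {H : ℝ} (hH : 1 / 2 ≤ H) (w z : ℝ) : 0 ≤ rker H w z := by
  have : 0 ≤ 2 * H - 1 := by linarith
  unfold rker
  positivity

lemma measurable_rker (H z : ℝ) : Measurable fun w => rker H w z := by
  unfold rker
  fun_prop

lemma integrableOn_rpow_mul_exp_neg_mul {q b : ℝ} (hq : -1 < q) (hb : 0 < b) :
    IntegrableOn (fun x : ℝ => x ^ q * exp (-b * x)) (Ioi 0) := by
  simpa using integrableOn_rpow_mul_exp_neg_mul_rpow hq one_pos hb

lemma rpow_exp_sub_one_le {p y : ℝ} (hp : -1 ≤ p) (hp0 : p ≤ 0) (hy : 0 < y) :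
    (exp y - 1) ^ p ≤ y ^ p * exp (p * y) * (1 + y) := by
  have hlow : y * exp y / (1 + y) ≤ exp y - 1 := by
    rw [div_le_iff₀ (by positivity)]
    nlinarith [add_one_le_exp y]
  calc (exp y - 1) ^ p ≤ (y * exp y / (1 + y)) ^ p :=
        rpow_le_rpow_of_nonpos (by positivity) hlow hp0
    _ = y ^ p * exp (p * y) * (1 + y) ^ (-p) := by
      rw [div_rpow (by positivity) (by positivity), mul_rpow hy.le (exp_pos _).le, ← exp_mul,
        rpow_neg (by positivity), div_eq_mul_inv, mul_comm y p]
    _ ≤ y ^ p * exp (p * y) * (1 + y) := by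
      gcongr
      simpa using rpow_le_rpow_of_exponent_le (by linarith : (1 : ℝ) ≤ 1 + y) (by linarith : -p ≤ 1)

lemma rker_zero_le {H s : ℝ} (hH : 1 / 2 ≤ H) (hH1 : H ≤ 1) (hs : 0 < s) :
    rker H s 0 ≤ H ^ (2 * H - 1) * (2 * H - 1) *
      (exp (-((1 - H) / H) * s) * (s / H) ^ (2 * H - 2) * (1 + s / H)) := by
  have hy : 0 < s / H := div_pos hs (by linarith)
  have hc : 0 ≤ H ^ (2 * H - 1) * (2 * H - 1) := by
    have : 0 ≤ 2 * H - 1 := by linarith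
    positivity
  have hexp : 0 ≤ exp (s / H) - 1 := by linarith [add_one_le_exp (s / H)]
  calc rker H s 0
      = H ^ (2 * H - 1) * (2 * H - 1) *
          (exp ((1 - H) * (s / H)) * (exp (s / H) - 1) ^ (2 * H - 2)) := by
        rw [rker, zero_div, exp_zero, mul_one, abs_of_nonneg hexp, ← exp_mul, mul_comm (s / H),
          mul_assoc]
    _ ≤ H ^ (2 * H - 1) * (2 * H - 1) * (exp ((1 - H) * (s / H)) *
          ((s / H) ^ (2 * H - 2) * exp ((2 * H - 2) * (s / H)) * (1 + s / H))) := by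
        gcongr
        exact rpow_exp_sub_one_le (by linarith) (by linarith) hy
    _ = _ := by
        rw [show -((1 - H) / H) * s = (1 - H) * (s / H) + (2 * H - 2) * (s / H) by ring, exp_add]
        ring

lemma integrableOn_rker_zero_Ioi {H : ℝ} (hH : H ∈ Ioo (1 / 2 : ℝ) 1) :
    IntegrableOn (fun s => rker H s 0) (Ioi 0) := by
  obtain ⟨hH1, hH2⟩ := hH
  have hH0 : 0 < H := by linarith
  have hdom : IntegrableOn (fun y => y ^ (2 * H - 2) * exp (-(1 - H) * y) +
      y ^ (2 * H - 2 + 1) * exp (-(1 - H) * y)) (Ioi 0) :=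
    (integrableOn_rpow_mul_exp_neg_mul (by linarith) (by linarith)).add
      (integrableOn_rpow_mul_exp_neg_mul (by linarith) (by linarith))
  replace hdom := (integrableOn_Ioi_comp_mul_left_iff _ 0 (inv_pos.2 hH0)).2
    (by rwa [mul_zero])
  have hbound : IntegrableOn (fun s => exp (-((1 - H) / H) * s) * (s / H) ^ (2 * H - 2) *
      (1 + s / H)) (Ioi 0) := by
    refine hdom.congr_fun (fun s hs => ?_) measurableSet_Ioi
    have hsH : s / H ≠ 0 := (div_pos hs hH0).ne'
    simp only [← div_eq_inv_mul, rpow_add_one hsH]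
    rw [show -((1 - H) / H) * s = -(1 - H) * (s / H) by ring]
    ring
  refine (hbound.const_mul (H ^ (2 * H - 1) * (2 * H - 1))).mono'
    (measurable_rker H 0).aestronglyMeasurable ((ae_restrict_mem measurableSet_Ioi).mono
      fun s hs => ?_)
  rw [norm_of_nonneg (rker_nonneg hH1.le s 0)]
  exact rker_zero_le hH1.le hH2.le hs

lemma integrable_rker_zero {H : ℝ} (hH : H ∈ Ioo (1 / 2 : ℝ) 1) :
    Integrable fun s => rker H s 0 := by
  have hpos := integrableOn_rker_zero_Ioi hH
  have hneg : IntegrableOn (fun s => rker H s 0) (Iio 0) := by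
    simpa [rker_neg_zero] using hpos.comp_neg
  rw [← integrableOn_univ, ← Iio_union_Ici, integrableOn_union]
  exact ⟨hneg, (integrableOn_Ici_iff_integrableOn_Ioi).2 hpos⟩

lemma integrable_rker_right {H : ℝ} (hH : H ∈ Ioo (1 / 2 : ℝ) 1) (x : ℝ) :
    Integrable fun v => rker H x v := by
  simpa only [← rker_eq_rker_sub_zero] using (integrable_rker_zero hH).comp_sub_left x

lemma intervalIntegral_rker_le {H : ℝ} (hH : H ∈ Ioo (1 / 2 : ℝ) 1) (x : ℝ) {a b : ℝ}
    (hab : a ≤ b) : ∫ v in a..b, rker H x v ≤ ∫ s, rker H s 0 := by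
  rw [intervalIntegral.integral_of_le hab]
  calc ∫ v in Ioc a b, rker H x v ≤ ∫ v, rker H x v :=
        setIntegral_le_integral (integrable_rker_right hH x) (ae_of_all _ (rker_nonneg hH.1.le x))
    _ = ∫ s, rker H s 0 := by
        simp only [rker_eq_rker_sub_zero H x]
        exact integral_sub_left_eq_self (fun s => rker H s 0) volume x

lemma intervalIntegral_exp_mul_le {α : ℝ} (hα : 0 < α) (T : ℝ) :
    ∫ u in (0 : ℝ)..T, exp (α * u) ≤ exp (α * T) / α := by
  rw [intervalIntegral.integral_comp_mul_left (fun u => exp u) hα.ne', integral_exp, mul_zero,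
    exp_zero, smul_eq_mul, inv_mul_eq_div]
  gcongr
  linarith

lemma intervalIntegral_exp_mul_rker_le {H α T : ℝ} (hH : H ∈ Ioo (1 / 2 : ℝ) 1) (hα : 0 ≤ α)
    (hT : 0 ≤ T) (x : ℝ) :
    ∫ v in (0 : ℝ)..T, exp (α * v) * rker H x v ≤ exp (α * T) * ∫ s, rker H s 0 := by
  have hint := (integrable_rker_right hH x).intervalIntegrable (a := 0) (b := T)
  calc ∫ v in (0 : ℝ)..T, exp (α * v) * rker H x v
      ≤ ∫ v in (0 : ℝ)..T, exp (α * T) * rker H x v := by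
        refine intervalIntegral.integral_mono_on hT (hint.continuousOn_mul (by fun_prop))
          (hint.const_mul _) fun v hv => ?_
        gcongr
        · exact rker_nonneg hH.1.le x v
        · exact hv.2
    _ ≤ exp (α * T) * ∫ s, rker H s 0 := by
        rw [intervalIntegral.integral_const_mul]
        exact mul_le_mul_of_nonneg_left (intervalIntegral_rker_le hH x hT) (exp_pos _).le

lemma intervalIntegral_intervalIntegral_exp_mul_rker_le {H α T : ℝ} (hH : H ∈ Ioo (1 / 2 : ℝ) 1)
    (hα : 0 < α) (hT : 0 ≤ T) :
    ∫ u in (0 : ℝ)..T, ∫ v in (0 : ℝ)..T, exp (α * u) * exp (α * v) * rker H u v ≤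
      (∫ s, rker H s 0) / α * exp (α * T) ^ 2 := by
  have hK : 0 ≤ ∫ s, rker H s 0 := integral_nonneg (rker_nonneg hH.1.le · 0)
  calc ∫ u in (0 : ℝ)..T, ∫ v in (0 : ℝ)..T, exp (α * u) * exp (α * v) * rker H u v
      = ∫ u in (0 : ℝ)..T, exp (α * u) * ∫ v in (0 : ℝ)..T, exp (α * v) * rker H u v := by
        simp only [mul_assoc, intervalIntegral.integral_const_mul]
    _ ≤ ∫ u in (0 : ℝ)..T, exp (α * u) * (exp (α * T) * ∫ s, rker H s 0) := by
        rw [intervalIntegral.integral_of_le hT, intervalIntegral.integral_of_le hT]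
        refine integral_mono_of_nonneg (ae_of_all _ fun u => ?_)
          (Continuous.integrableOn_Ioc (by fun_prop))
          (ae_of_all _ fun u => mul_le_mul_of_nonneg_left
            (intervalIntegral_exp_mul_rker_le hH hα.le hT u) (exp_pos _).le)
        exact mul_nonneg (exp_pos _).le (intervalIntegral.integral_nonneg hT
          fun v _ => mul_nonneg (exp_pos _).le (rker_nonneg hH.1.le u v))
    _ ≤ exp (α * T) / α * (exp (α * T) * ∫ s, rker H s 0) := by
        rw [intervalIntegral.integral_mul_const]
        gcongr
        exact intervalIntegral_exp_mul_le hα T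
    _ = (∫ s, rker H s 0) / α * exp (α * T) ^ 2 := by ring

lemma lker_of_mem {α τ T u v : ℝ} (hu : u ∈ Icc 0 T) (hv : v ∈ Icc 0 T) :
    lker α τ T u v = 1 / (2 * α * τ * T) * exp (-2 * α * T) * exp (α * u) * exp (α * v) := by
  rw [lker, indicator_of_mem (mk_mem_prod hu hv)]

lemma intervalIntegral_lker_mul_lker_mul_rker_mul_rker_eq_sq {H α τ T : ℝ} (hT : 0 ≤ T) :
    ∫ u₁ in (0:ℝ)..T, ∫ u₂ in (0:ℝ)..T, ∫ v₁ in (0:ℝ)..T, ∫ v₂ in (0:ℝ)..T,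
        lker α τ T u₁ u₂ * lker α τ T v₁ v₂ * rker H u₁ v₁ * rker H u₂ v₂ =
      (1 / (2 * α * τ * T) * exp (-2 * α * T) *
        ∫ u in (0 : ℝ)..T, ∫ v in (0 : ℝ)..T, exp (α * u) * exp (α * v) * rker H u v) ^ 2 := by
  calc _ = ∫ u₁ in (0:ℝ)..T, ∫ u₂ in (0:ℝ)..T, ∫ v₁ in (0:ℝ)..T, ∫ v₂ in (0:ℝ)..T,
        (1 / (2 * α * τ * T) * exp (-2 * α * T)) ^ 2 *
          ((exp (α * u₁) * exp (α * v₁) * rker H u₁ v₁) *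
            (exp (α * u₂) * exp (α * v₂) * rker H u₂ v₂)) := by
        refine intervalIntegral.integral_congr fun u₁ hu₁ => intervalIntegral.integral_congr
          fun u₂ hu₂ => intervalIntegral.integral_congr fun v₁ hv₁ =>
            intervalIntegral.integral_congr fun v₂ hv₂ => ?_
        rw [uIcc_of_le hT] at hu₁ hu₂ hv₁ hv₂
        simp only [lker_of_mem hu₁ hu₂, lker_of_mem hv₁ hv₂]
        ring
    _ = _ := by
        simp only [intervalIntegral.integral_const_mul, intervalIntegral.integral_mul_const]
        ring

theorem stmt16 (H α τ : ℝ) (hH : H ∈ Set.Ioo (1/2 : ℝ) 1) (hα : 0 < α) (hτ : 0 < τ) :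
    ∃ C : ℝ, 0 < C ∧ ∀ T : ℝ, 1 ≤ T →
      (∫ u₁ in (0:ℝ)..T, ∫ u₂ in (0:ℝ)..T, ∫ v₁ in (0:ℝ)..T, ∫ v₂ in (0:ℝ)..T,
          lker α τ T u₁ u₂ * lker α τ T v₁ v₂ * rker H u₁ v₁ * rker H u₂ v₂)
        ≤ C / T ^ 2 := by
  set K := ∫ s, rker H s 0
  have hK : 0 ≤ K := integral_nonneg (rker_nonneg hH.1.le · 0)
  refine ⟨((K + 1) / (2 * α ^ 2 * τ)) ^ 2, by positivity, fun T hT => ?_⟩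
  have hT0 : 0 < T := by linarith
  have hJ0 : 0 ≤ ∫ u in (0 : ℝ)..T, ∫ v in (0 : ℝ)..T, exp (α * u) * exp (α * v) * rker H u v :=
    intervalIntegral.integral_nonneg hT0.le fun u _ => intervalIntegral.integral_nonneg hT0.le
      fun v _ => mul_nonneg (by positivity) (rker_nonneg hH.1.le u v)
  rw [intervalIntegral_lker_mul_lker_mul_rker_mul_rker_eq_sq hT0.le]
  calc _ ≤ (1 / (2 * α * τ * T) * exp (-2 * α * T) * ((K + 1) / α * exp (α * T) ^ 2)) ^ 2 := by
        gcongr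
        exact (intervalIntegral_intervalIntegral_exp_mul_rker_le hH hα hT0.le).trans
          (by gcongr; linarith)
    _ = ((K + 1) / (2 * α ^ 2 * τ)) ^ 2 / T ^ 2 := by
        have hexp : exp (-2 * α * T) * exp (α * T) ^ 2 = 1 := by
          rw [sq, ← exp_add, ← exp_add, show -2 * α * T + (α * T + α * T) = 0 by ring, exp_zero]
        rw [show 1 / (2 * α * τ * T) * exp (-2 * α * T) * ((K + 1) / α * exp (α * T) ^ 2) =
          (K + 1) / (2 * α ^ 2 * τ * T) * (exp (-2 * α * T) * exp (α * T) ^ 2) by ring, hexp]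
        field_simp
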